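/- Taking the minimum over flows: if for each port op and priority p the local deadline is D_op^p = min over flows f crossing (op,p) of (D_f − d_src − d_prop)·r_op / (Σ_{op' ∈ φ_f\src} r_op'), then for every flow f crossing (op,p) with priority p, summing D_op^p over all ports op on f's path (excluding the source) yields a value at most D_f − d_src − d_prop. -/
import Mathlib


/-- Taking the minimum over flows: if the local deadline of each port is the infimum,
over all flows crossing it, of the proportionally-distributed residual deadline, then
summing the local deadlines over any flow's path gives at most that flow's residual
deadline `D f - dsrc - dprop`. -/
theorem min_local_deadlines_respect_budget
    (OP Flow : Type) [DecidableEq OP]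
    (F : Finset Flow) (φ : Flow → Finset OP) (D : Flow → ℝ) (r : OP → ℝ)
    (dsrc dprop : ℝ)
    (hr : ∀ op, 0 < r op)
    (hD : ∀ g ∈ F, dsrc + dprop ≤ D g)
    (hφ : ∀ g ∈ F, (φ g).Nonempty)
    (Dloc : OP → ℝ)
    (hDloc : ∀ op, Dloc op =
      sInf {x : ℝ | ∃ g ∈ F, op ∈ φ g ∧
        x = (D g - dsrc - dprop) * r op / (∑ op' ∈ φ g, r op')})
    (f : Flow) (hf : f ∈ F) :
    ∑ op ∈ φ f, Dloc op ≤ D f - dsrc - dprop := by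
  have hS : 0 < ∑ op' ∈ φ f, r op' :=
    Finset.sum_pos (fun op' _ => hr op') (hφ f hf)
  have key : ∀ op ∈ φ f,
      Dloc op ≤ (D f - dsrc - dprop) * r op / (∑ op' ∈ φ f, r op') := by
    intro op hop
    rw [hDloc op]
    apply csInf_le
    · refine ⟨0, fun x hx => ?_⟩
      obtain ⟨g, hg, hgop, rfl⟩ := hx
      have hSg : 0 < ∑ op' ∈ φ g, r op' :=
        Finset.sum_pos (fun op' _ => hr op') (hφ g hg)
      have : 0 ≤ D g - dsrc - dprop := by linarith [hD g hg]
      exact div_nonneg (mul_nonneg this (hr op).le) hSg.le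
    · exact ⟨f, hf, hop, rfl⟩
  calc ∑ op ∈ φ f, Dloc op
      ≤ ∑ op ∈ φ f, (D f - dsrc - dprop) * r op / (∑ op' ∈ φ f, r op') :=
        Finset.sum_le_sum key
    _ = (D f - dsrc - dprop) * (∑ op ∈ φ f, r op) / (∑ op' ∈ φ f, r op') := by
        rw [Finset.mul_sum, Finset.sum_div]
    _ = D f - dsrc - dprop := by
        field_simp
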